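/- The function h(x) = x exp(x²/2) Φ(x) is strictly increasing on ℝ, i.e., h'(x) = (1+x²) exp(x²/2) Φ(x) + x/√(2π) > 0 for all x. -/

import Mathlib

/-!
By the chain rule `h' = (1 + x²) e^{x²/2} Φ(x) + x/√(2π)`. Positivity follows from the
Mills-ratio lower bound `√(2π) Φ(x) > G(x) := -x e^{-x²/2} / (1 + x²)` (`millsLower`), since
`(1 + x²) e^{x²/2} G(x) = -x`. The bound holds for every `x`: `G` vanishes at `-∞` and
`G' = e^{-y²/2} - 2 e^{-y²/2} / (1 + y²)² < e^{-y²/2}`, so integrate over `(-∞, x]`.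
-/

open Real MeasureTheory Set Filter Topology

noncomputable def Phi (x : ℝ) : ℝ :=
  (Real.sqrt (2 * Real.pi))⁻¹ * ∫ y in Set.Iic x, Real.exp (-y ^ 2 / 2)

theorem hasDerivAt_integral_Iic {E : Type*} [NormedAddCommGroup E] [NormedSpace ℝ E]
    [CompleteSpace E] {f : ℝ → E} (hi : Integrable f) (hc : Continuous f) (x : ℝ) :
    HasDerivAt (fun u => ∫ y in Iic u, f y) (f x) x := by
  have hsplit : (fun u => ∫ y in Iic u, f y) =
      fun u => (∫ y in Iic 0, f y) + ∫ y in (0 : ℝ)..u, f y := by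
    ext u
    rw [← intervalIntegral.integral_Iic_sub_Iic hi.integrableOn hi.integrableOn]
    abel
  rw [hsplit]
  exact (intervalIntegral.integral_hasDerivAt_right hi.intervalIntegrable
    (hc.stronglyMeasurableAtFilter _ _) hc.continuousAt).const_add _

theorem integral_Iic_pos {f : ℝ → ℝ} {x : ℝ} (hi : IntegrableOn f (Iic x))
    (hpos : ∀ y, 0 < f y) :
    0 < ∫ y in Iic x, f y := by
  rw [setIntegral_pos_iff_support_of_nonneg_ae (.of_forall fun y => (hpos y).le) hi,
    Function.support_eq_univ fun y => (hpos y).ne', univ_inter]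
  simp

theorem integrable_exp_neg_sq_div_two : Integrable fun y : ℝ => exp (-y ^ 2 / 2) := by
  simpa [neg_div, div_eq_inv_mul, mul_comm] using
    integrable_exp_neg_mul_sq (b := 2⁻¹) (by norm_num)

theorem tendsto_exp_neg_sq_div_two_atBot :
    Tendsto (fun y : ℝ => exp (-y ^ 2 / 2)) atBot (𝓝 0) := by
  have hsq : Tendsto (fun y : ℝ => y ^ 2) atBot atTop := by
    simpa [Function.comp_def, neg_sq] using
      (tendsto_pow_atTop (α := ℝ) two_ne_zero).comp tendsto_neg_atBot_atTop
  exact tendsto_exp_atBot.comp ((tendsto_neg_atTop_atBot.comp hsq).atBot_div_const two_pos)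

theorem hasDerivAt_Phi (x : ℝ) : HasDerivAt Phi (exp (-x ^ 2 / 2) / √(2 * π)) x := by
  rw [div_eq_inv_mul]
  exact (hasDerivAt_integral_Iic integrable_exp_neg_sq_div_two (by fun_prop) x).const_mul _

noncomputable def millsLower (y : ℝ) : ℝ := -y / (1 + y ^ 2) * exp (-y ^ 2 / 2)

theorem hasDerivAt_millsLower (y : ℝ) :
    HasDerivAt millsLower (exp (-y ^ 2 / 2) - 2 * exp (-y ^ 2 / 2) / (1 + y ^ 2) ^ 2) y := by
  have hden : (1 : ℝ) + y ^ 2 ≠ 0 := by positivity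
  refine (((hasDerivAt_id y).neg.div ((hasDerivAt_pow 2 y).const_add 1) hden).mul
    ((hasDerivAt_pow 2 y).neg.div_const 2).exp).congr_deriv ?_
  simp only [Pi.div_apply, Pi.neg_apply, id_eq]
  field_simp
  ring

theorem tendsto_millsLower_atBot : Tendsto millsLower atBot (𝓝 0) := by
  refine squeeze_zero_norm (fun y => ?_) tendsto_exp_neg_sq_div_two_atBot
  have hfrac : |-y / (1 + y ^ 2)| ≤ 1 := by
    have hden : (0 : ℝ) < 1 + y ^ 2 := by positivity
    rw [abs_div, abs_neg, abs_of_pos hden, div_le_one hden]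
    nlinarith [sq_abs y, abs_nonneg y]
  rw [millsLower, norm_mul, norm_of_nonneg (exp_pos _).le]
  exact mul_le_of_le_one_left (exp_pos _).le hfrac

theorem millsLower_lt_integral_Iic (x : ℝ) : millsLower x < ∫ y in Iic x, exp (-y ^ 2 / 2) := by
  have hgauss := integrable_exp_neg_sq_div_two.integrableOn (s := Iic x)
  have hcorr : IntegrableOn (fun y : ℝ => 2 * exp (-y ^ 2 / 2) / (1 + y ^ 2) ^ 2) (Iic x) := by
    have hcont : Continuous fun y : ℝ => 2 * exp (-y ^ 2 / 2) / (1 + y ^ 2) ^ 2 :=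
      .div (by fun_prop) (by fun_prop) fun y => by positivity
    refine (hgauss.const_mul 2).mono' hcont.aestronglyMeasurable (.of_forall fun y => ?_)
    rw [norm_of_nonneg (by positivity)]
    exact div_le_self (by positivity) (one_le_pow₀ (by nlinarith))
  have hftc := integral_Iic_of_hasDerivAt_of_tendsto' (fun y _ => hasDerivAt_millsLower y)
    (hgauss.sub hcorr) tendsto_millsLower_atBot
  rw [integral_sub hgauss hcorr, sub_zero] at hftc
  have : 0 < ∫ y in Iic x, 2 * exp (-y ^ 2 / 2) / (1 + y ^ 2) ^ 2 :=
    integral_Iic_pos hcorr fun y => by positivity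
  linarith

theorem one_add_sq_mul_exp_mul_millsLower (x : ℝ) :
    (1 + x ^ 2) * exp (x ^ 2 / 2) * millsLower x = -x := by
  simp only [millsLower, neg_div, exp_neg]
  field_simp

/-- The function `h(x) = x exp(x²/2) Φ(x)` is strictly increasing: its derivative
`h'(x) = (1+x²) exp(x²/2) Φ(x) + x/√(2π)` is positive for all `x`. -/
theorem h_strictMono :
    StrictMono (fun x : ℝ => x * Real.exp (x ^ 2 / 2) * Phi x) ∧
    ∀ x : ℝ,
      HasDerivAt (fun x : ℝ => x * Real.exp (x ^ 2 / 2) * Phi x)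
        ((1 + x ^ 2) * Real.exp (x ^ 2 / 2) * Phi x + x / Real.sqrt (2 * Real.pi)) x ∧
      0 < (1 + x ^ 2) * Real.exp (x ^ 2 / 2) * Phi x + x / Real.sqrt (2 * Real.pi) := by
  have hderiv (x : ℝ) : HasDerivAt (fun x : ℝ => x * exp (x ^ 2 / 2) * Phi x)
      ((1 + x ^ 2) * exp (x ^ 2 / 2) * Phi x + x / √(2 * π)) x := by
    have hexp : HasDerivAt (fun x : ℝ => exp (x ^ 2 / 2)) (exp (x ^ 2 / 2) * x) x := by
      simpa using ((hasDerivAt_pow 2 x).div_const 2).exp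
    refine (((hasDerivAt_id x).mul hexp).mul (hasDerivAt_Phi x)).congr_deriv ?_
    simp only [Pi.mul_apply, id_eq, neg_div, exp_neg]
    field_simp
  have hpos (x : ℝ) : 0 < (1 + x ^ 2) * exp (x ^ 2 / 2) * Phi x + x / √(2 * π) := by
    have hmills : millsLower x / √(2 * π) < Phi x := by
      rw [Phi, div_eq_inv_mul]
      exact mul_lt_mul_of_pos_left (millsLower_lt_integral_Iic x) (by positivity)
    have hcancel := one_add_sq_mul_exp_mul_millsLower x
    calc (0 : ℝ)
        _ = (1 + x ^ 2) * exp (x ^ 2 / 2) * (millsLower x / √(2 * π)) + x / √(2 * π) := by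
          rw [← mul_div_assoc, hcancel, neg_div, neg_add_cancel]
        _ < _ := by gcongr
  exact ⟨strictMono_of_deriv_pos fun x => (hderiv x).deriv ▸ hpos x,
    fun x => ⟨hderiv x, hpos x⟩⟩
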